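/- arXiv:0902.1628 — 2 statements merged into one kernel-verified Lean document; each statement's English description precedes it below -/
import Mathlib

section
/- The Lie algebra sp_N(ℝ) is generated, as a Lie algebra, by the set {X_{ij}, Y_{ij} : i,j ∈ {1,…,N}, |i-j| ≤ 1}. -/
/-! An element of `sp_N` is a block matrix `[[A, B], [C, -Aᵀ]]` with `B`, `C` symmetric, hence a
combination of the `H_ij = [[E_ij, 0], [0, -E_ji]]`, `X_ij` and `Y_ij`. For adjacent `i, j`, `H_ij`
is a multiple of `[X_ii, Y_ij]`; since `[H_ik, H_kj] = H_ij` for `i ≠ j`, chaining along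
`1, …, N` yields every `H_ij`, and then `[H_ij, X_jj]` and `[H_ji, Y_jj]` are multiples of `X_ij`
and `Y_ij`. -/

open Matrix

attribute [local instance 100] LieRing.ofAssociativeRing

def elemE (N : ℕ) (i j : Fin N) : Matrix (Fin N) (Fin N) ℝ :=
  Matrix.single i j 1

noncomputable def matX (N : ℕ) (i j : Fin N) : Matrix (Fin N ⊕ Fin N) (Fin N ⊕ Fin N) ℝ :=
  (1/2 : ℝ) • Matrix.fromBlocks 0 (elemE N i j + elemE N j i) 0 0

noncomputable def matY (N : ℕ) (i j : Fin N) : Matrix (Fin N ⊕ Fin N) (Fin N ⊕ Fin N) ℝ :=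
  (matX N i j)ᵀ

def symplJ (N : ℕ) : Matrix (Fin N ⊕ Fin N) (Fin N ⊕ Fin N) ℝ :=
  Matrix.fromBlocks 0 (-1) 1 0

theorem Fin.rel_of_adjacent {N : ℕ} {P : Fin N → Fin N → Prop}
    (hadj : ∀ i j : Fin N, |(i : ℤ) - j| ≤ 1 → P i j)
    (htrans : ∀ i k j : Fin N, i ≠ j → P i k → P k j → P i j) (i j : Fin N) : P i j := by
  wlog hij : i ≤ j generalizing P i j
  · exact this (P := fun a b => P b a) (fun a b h => hadj b a (by rwa [abs_sub_comm]))
      (fun a k b hab hak hkb => htrans b k a hab.symm hkb hak) j i (le_of_not_ge hij)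
  obtain ⟨j, hj⟩ := j
  induction j with
  | zero =>
    obtain rfl : i = ⟨0, hj⟩ := Fin.ext (Nat.le_zero.1 hij)
    exact hadj _ _ (by simp)
  | succ m ih =>
    by_cases him : i = ⟨m + 1, hj⟩
    · exact hadj _ _ (by simp [him])
    · have hm : m < N := by omega
      refine htrans i ⟨m, hm⟩ _ him (ih hm ?_) (hadj _ _ (by simp))
      simp only [Fin.ext_iff, Fin.le_def] at him hij ⊢
      omega

namespace Matrix

variable {R n : Type*} [CommRing R] [DecidableEq n]

theorem isSymm_single_add_single (i j : n) (a : R) : (single i j a + single j i a).IsSymm := by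
  simpa [transpose_single] using isSymm_add_transpose_self (single i j a)

theorem isSymm_single_self (i : n) (a : R) : (single i i a).IsSymm := by
  simp [IsSymm, transpose_single]

theorem single_self_eq_invOf_two_smul [Invertible (2 : R)] (i : n) :
    single i i (1 : R) = ⅟(2 : R) • (single i i 1 + single i i 1) := by
  rw [← two_smul R, smul_smul, invOf_mul_self, one_smul]

variable [Fintype n] {M : Type*} [AddCommGroup M] [Module R M]

theorem map_mem_of_map_single_mem (f : Matrix n n R →ₗ[R] M) {p : Submodule R M}
    (h : ∀ i j, f (single i j 1) ∈ p) (A : Matrix n n R) : f A ∈ p := by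
  induction A using Matrix.induction_on' with
  | h_zero => simp
  | h_add A B hA hB => simpa using p.add_mem hA hB
  | h_std_basis i j x => simpa [← map_smul] using p.smul_mem x (h i j)

theorem map_mem_of_map_single_add_single_mem [Invertible (2 : R)] (f : Matrix n n R →ₗ[R] M)
    {p : Submodule R M} (h : ∀ i j, f (single i j 1 + single j i 1) ∈ p) {B : Matrix n n R}
    (hB : B.IsSymm) : f B ∈ p := by
  have hsum : f (B + Bᵀ) ∈ p :=
    map_mem_of_map_single_mem (f ∘ₗ (LinearMap.id + (transposeLinearEquiv n n R R).toLinearMap))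
      (by simpa [transpose_single] using h) B
  rw [hB.eq, ← two_smul R B, map_smul] at hsum
  simpa using p.smul_mem (⅟2 : R) hsum

end Matrix

namespace LieAlgebra.Symplectic

variable {R n : Type*} [CommRing R]

@[simps]
def diagBlock : Matrix n n R →ₗ[R] Matrix (n ⊕ n) (n ⊕ n) R where
  toFun A := fromBlocks A 0 0 (-Aᵀ)
  map_add' A B := by simp [fromBlocks_add, add_comm]
  map_smul' c A := by simp [fromBlocks_smul]

@[simps]
def upperBlock : Matrix n n R →ₗ[R] Matrix (n ⊕ n) (n ⊕ n) R where
  toFun S := fromBlocks 0 S 0 0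
  map_add' S T := by simp [fromBlocks_add]
  map_smul' c S := by simp [fromBlocks_smul]

@[simps]
def lowerBlock : Matrix n n R →ₗ[R] Matrix (n ⊕ n) (n ⊕ n) R where
  toFun T := fromBlocks 0 0 T 0
  map_add' S T := by simp [fromBlocks_add]
  map_smul' c T := by simp [fromBlocks_smul]

variable [DecidableEq n] [Fintype n]

theorem mem_sp_iff {M : Matrix (n ⊕ n) (n ⊕ n) R} : M ∈ sp n R ↔ Mᵀ * J n R + J n R * M = 0 := by
  rw [sp, mem_skewAdjointMatricesLieSubalgebra, mem_skewAdjointMatricesSubmodule,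
    Matrix.IsSkewAdjoint, Matrix.IsAdjointPair, mul_neg, eq_neg_iff_add_eq_zero]

theorem fromBlocks_mem_sp_iff {A B C D : Matrix n n R} :
    fromBlocks A B C D ∈ sp n R ↔ B.IsSymm ∧ C.IsSymm ∧ D = -Aᵀ := by
  rw [mem_sp_iff, J, fromBlocks_transpose, fromBlocks_multiply, fromBlocks_multiply,
    fromBlocks_add, ← fromBlocks_zero, fromBlocks_inj]
  simp only [Matrix.IsSymm, mul_zero, zero_mul, mul_one, one_mul, mul_neg, neg_mul, add_zero,
    zero_add, add_neg_eq_zero, neg_add_eq_zero]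
  constructor
  · rintro ⟨hC, rfl, -, hB⟩
    exact ⟨hB, hC, rfl⟩
  · rintro ⟨hB, hC, rfl⟩
    simp [hB, hC]

theorem eq_diagBlock_add_upperBlock_add_lowerBlock_of_mem_sp {M : Matrix (n ⊕ n) (n ⊕ n) R}
    (hM : M ∈ sp n R) :
    M = diagBlock M.toBlocks₁₁ + upperBlock M.toBlocks₁₂ + lowerBlock M.toBlocks₂₁ ∧
      M.toBlocks₁₂.IsSymm ∧ M.toBlocks₂₁.IsSymm := by
  rw [← fromBlocks_toBlocks M, fromBlocks_mem_sp_iff] at hM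
  obtain ⟨hB, hC, hD⟩ := hM
  refine ⟨?_, hB, hC⟩
  conv_lhs => rw [← fromBlocks_toBlocks M, hD]
  simp [fromBlocks_add]

theorem upperBlock_mem_sp {S : Matrix n n R} (hS : S.IsSymm) : upperBlock S ∈ sp n R :=
  fromBlocks_mem_sp_iff.2 ⟨hS, isSymm_zero, by simp⟩

theorem lowerBlock_mem_sp {T : Matrix n n R} (hT : T.IsSymm) : lowerBlock T ∈ sp n R :=
  fromBlocks_mem_sp_iff.2 ⟨isSymm_zero, hT, by simp⟩

theorem lie_upperBlock_lowerBlock {S T : Matrix n n R} (hS : S.IsSymm) (hT : T.IsSymm) :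
    ⁅upperBlock S, lowerBlock T⁆ = diagBlock (S * T) := by
  rw [Ring.lie_def]
  simp [fromBlocks_multiply, sub_eq_add_neg, fromBlocks_neg, fromBlocks_add, transpose_mul,
    hS.eq, hT.eq]

theorem lie_diagBlock_upperBlock (A S : Matrix n n R) :
    ⁅diagBlock A, upperBlock S⁆ = upperBlock (A * S + S * Aᵀ) := by
  rw [Ring.lie_def]
  simp [fromBlocks_multiply, sub_eq_add_neg, fromBlocks_neg, fromBlocks_add]

theorem lie_diagBlock_lowerBlock (A T : Matrix n n R) :
    ⁅diagBlock A, lowerBlock T⁆ = -lowerBlock (Aᵀ * T + T * A) := by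
  rw [Ring.lie_def]
  simp [fromBlocks_multiply, fromBlocks_neg, fromBlocks_add, sub_eq_add_neg, add_comm]

theorem lie_diagBlock_diagBlock (A B : Matrix n n R) :
    ⁅diagBlock A, diagBlock B⁆ = diagBlock ⁅A, B⁆ := by
  rw [Ring.lie_def, Ring.lie_def]
  simp [fromBlocks_multiply, transpose_mul, sub_eq_add_neg, fromBlocks_neg, fromBlocks_add]

theorem upperBlock_single_add_single_mem {L : LieSubalgebra R (Matrix (n ⊕ n) (n ⊕ n) R)}
    (hH : ∀ i j, diagBlock (single i j (1 : R)) ∈ L) (hX : ∀ i, upperBlock (single i i (1 : R)) ∈ L)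
    (i j : n) : upperBlock (single i j (1 : R) + single j i 1) ∈ L := by
  have hbr := L.lie_mem (hH i j) (hX j)
  rwa [lie_diagBlock_upperBlock, transpose_single, single_mul_single_same,
    single_mul_single_same, mul_one] at hbr

theorem lowerBlock_single_add_single_mem {L : LieSubalgebra R (Matrix (n ⊕ n) (n ⊕ n) R)}
    (hH : ∀ i j, diagBlock (single i j (1 : R)) ∈ L) (hY : ∀ i, lowerBlock (single i i (1 : R)) ∈ L)
    (i j : n) : lowerBlock (single i j (1 : R) + single j i 1) ∈ L := by
  have hbr := L.lie_mem (hH j i) (hY j)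
  rwa [lie_diagBlock_lowerBlock, transpose_single, single_mul_single_same,
    single_mul_single_same, mul_one, neg_mem_iff] at hbr

theorem sp_le_of_single_mem [Invertible (2 : R)] {L : LieSubalgebra R (Matrix (n ⊕ n) (n ⊕ n) R)}
    (hH : ∀ i j, diagBlock (single i j (1 : R)) ∈ L) (hX : ∀ i, upperBlock (single i i (1 : R)) ∈ L)
    (hY : ∀ i, lowerBlock (single i i (1 : R)) ∈ L) : sp n R ≤ L := by
  intro M hM
  obtain ⟨hdecomp, hB, hC⟩ := eq_diagBlock_add_upperBlock_add_lowerBlock_of_mem_sp hM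
  rw [hdecomp]
  refine L.add_mem (L.add_mem ?_ ?_) ?_
  · exact map_mem_of_map_single_mem diagBlock (p := L.toSubmodule) hH _
  · exact map_mem_of_map_single_add_single_mem upperBlock (p := L.toSubmodule)
      (upperBlock_single_add_single_mem hH hX) hB
  · exact map_mem_of_map_single_add_single_mem lowerBlock (p := L.toSubmodule)
      (lowerBlock_single_add_single_mem hH hY) hC

section NearDiagonal

variable [Invertible (2 : R)] {N : ℕ} {L : LieSubalgebra R (Matrix (Fin N ⊕ Fin N) (Fin N ⊕ Fin N) R)}

theorem diagBlock_single_mem (hX : ∀ i, upperBlock (single i i (1 : R)) ∈ L)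
    (hY : ∀ i j : Fin N, |(i : ℤ) - j| ≤ 1 → lowerBlock (single i j (1 : R) + single j i 1) ∈ L)
    (i j : Fin N) : diagBlock (single i j (1 : R)) ∈ L := by
  refine Fin.rel_of_adjacent (P := fun i j => diagBlock (single i j (1 : R)) ∈ L)
    (fun i j hij => ?_) (fun i k j hij hik hkj => ?_) i j
  · have hbr := L.lie_mem (hX i) (hY i j hij)
    rw [lie_upperBlock_lowerBlock (isSymm_single_self i 1) (isSymm_single_add_single i j 1),
      mul_add, single_mul_single_same, mul_one] at hbr
    by_cases hij : i = j
    · subst hij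
      rw [single_mul_single_same, mul_one] at hbr
      rw [single_self_eq_invOf_two_smul, map_smul]
      exact L.smul_mem _ hbr
    · rwa [single_mul_single_of_ne _ _ _ _ hij, add_zero] at hbr
  · have hbr := L.lie_mem hik hkj
    rwa [lie_diagBlock_diagBlock, Ring.lie_def, single_mul_single_same,
      single_mul_single_of_ne _ _ _ _ (Ne.symm hij), sub_zero, mul_one] at hbr

theorem sp_le_of_near_diag_mem
    (hX : ∀ i j : Fin N, |(i : ℤ) - j| ≤ 1 → upperBlock (single i j (1 : R) + single j i 1) ∈ L)
    (hY : ∀ i j : Fin N, |(i : ℤ) - j| ≤ 1 → lowerBlock (single i j (1 : R) + single j i 1) ∈ L) :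
    sp (Fin N) R ≤ L := by
  have hXd : ∀ i, upperBlock (single i i (1 : R)) ∈ L := fun i => by
    rw [single_self_eq_invOf_two_smul, map_smul]
    exact L.smul_mem _ (hX i i (by simp))
  have hYd : ∀ i, lowerBlock (single i i (1 : R)) ∈ L := fun i => by
    rw [single_self_eq_invOf_two_smul, map_smul]
    exact L.smul_mem _ (hY i i (by simp))
  exact sp_le_of_single_mem (diagBlock_single_mem hXd hY) hXd hYd

end NearDiagonal

end LieAlgebra.Symplectic

open LieAlgebra.Symplectic

theorem matX_eq_smul_upperBlock (N : ℕ) (i j : Fin N) :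
    matX N i j = (1 / 2 : ℝ) • upperBlock (single i j 1 + single j i 1) :=
  rfl

theorem matY_eq_smul_lowerBlock (N : ℕ) (i j : Fin N) :
    matY N i j = (1 / 2 : ℝ) • lowerBlock (single i j 1 + single j i 1) := by
  rw [matY, matX_eq_smul_upperBlock, transpose_smul, upperBlock_apply, lowerBlock_apply,
    fromBlocks_transpose, (isSymm_single_add_single i j 1).eq, transpose_zero]

/-- `sp_N(ℝ)` is generated, as a Lie algebra (with the commutator bracket on matrices),
by the set `{X_{ij}, Y_{ij} : |i - j| ≤ 1}`. -/
theorem lieSpan_XY_near_diag_eq_sp (N : ℕ) :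
    ∀ M : Matrix (Fin N ⊕ Fin N) (Fin N ⊕ Fin N) ℝ,
      M ∈ LieSubalgebra.lieSpan ℝ (Matrix (Fin N ⊕ Fin N) (Fin N ⊕ Fin N) ℝ)
        {A | ∃ i j : Fin N, |(i : ℤ) - (j : ℤ)| ≤ 1 ∧ (A = matX N i j ∨ A = matY N i j)} ↔
      Mᵀ * symplJ N + symplJ N * M = 0 := by
  set L := LieSubalgebra.lieSpan ℝ (Matrix (Fin N ⊕ Fin N) (Fin N ⊕ Fin N) ℝ)
    {A | ∃ i j : Fin N, |(i : ℤ) - (j : ℤ)| ≤ 1 ∧ (A = matX N i j ∨ A = matY N i j)}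
  have hhalf : (1 / 2 : ℝ) ≠ 0 := by norm_num
  have hL : L = sp (Fin N) ℝ := by
    refine le_antisymm (LieSubalgebra.lieSpan_le.2 ?_) (sp_le_of_near_diag_mem ?_ ?_)
    · rintro A ⟨i, j, -, rfl | rfl⟩
      · rw [matX_eq_smul_upperBlock]
        exact (sp _ _).smul_mem _ (upperBlock_mem_sp (isSymm_single_add_single i j 1))
      · rw [matY_eq_smul_lowerBlock]
        exact (sp _ _).smul_mem _ (lowerBlock_mem_sp (isSymm_single_add_single i j 1))
    · intro i j hij
      refine (L.toSubmodule.smul_mem_iff hhalf).1 ?_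
      exact matX_eq_smul_upperBlock N i j ▸ LieSubalgebra.subset_lieSpan ⟨i, j, hij, .inl rfl⟩
    · intro i j hij
      refine (L.toSubmodule.smul_mem_iff hhalf).1 ?_
      exact matY_eq_smul_lowerBlock N i j ▸ LieSubalgebra.subset_lieSpan ⟨i, j, hij, .inr rfl⟩
  intro M
  rw [hL, mem_sp_iff]
  rfl
end

section
/- Let V ∈ L¹_loc(ℝ, M_N(ℝ)) with ‖V‖_{ℓ,u} := sup_{x∈ℝ} ∫_x^{x+ℓ} ‖V(t)‖ dt < ∞ for some fixed ℓ > 0. Then there exists C > 0 (depending only on ℓ and ‖V‖_{ℓ,u}) such that for every solution u of −u'' + Vu = 0 and every x ∈ ℝ, ∫_{x−ℓ}^{x+ℓ} ‖u(t)‖² dt ≥ C(‖u(x)‖² + ‖u'(x)‖²). -/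
/-!
The energy `E = ‖u‖² + ‖u'‖²` of a solution satisfies `|E'| ≤ (1 + ‖V‖) E`. Splitting
`[x - ℓ, x + ℓ]` into pieces on which `∫ (1 + ‖V‖) ≤ 1/4`, a Grönwall argument shows that `E`
varies by at most a factor `M = M(ℓ, K)` there, so `ℓ E(x) ≤ M (∫ ‖u‖² + ∫ ‖u'‖²)` over the middle
half of the window. The kinetic part is then controlled by integrating
`⟪u, u'⟫' = ‖u'‖² + ⟪u, V u⟫` between points `a`, `b` of the outer quarters at which `‖u‖²` is at
most its average: the boundary terms are bounded by AM-GM against `E(x)` and the potential term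
by `2K sup ‖u‖²`, where `sup ‖u‖² ≤ ‖u a‖² + ε ∫ ‖u'‖² + ε⁻¹ ∫ ‖u‖²`.
-/

open MeasureTheory Set intervalIntegral
open scoped RealInnerProductSpace

theorem mul_le_integral_of_forall_le {g : ℝ → ℝ} {p q c : ℝ} (hpq : p ≤ q)
    (hg : IntervalIntegrable g volume p q) (hc : ∀ t ∈ Icc p q, c ≤ g t) :
    (q - p) * c ≤ ∫ t in p..q, g t := by
  simpa using integral_mono_on hpq intervalIntegrable_const hg hc

theorem exists_mem_Icc_mul_le_integral {f : ℝ → ℝ} {p q : ℝ} (hpq : p ≤ q)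
    (hf : ContinuousOn f (Icc p q)) : ∃ c ∈ Icc p q, (q - p) * f c ≤ ∫ t in p..q, f t := by
  obtain ⟨c, hc, hmin⟩ := isCompact_Icc.exists_isMinOn (nonempty_Icc.2 hpq) hf
  exact ⟨c, hc, mul_le_integral_of_forall_le hpq (hf.intervalIntegrable_of_Icc hpq)
    fun t ht => hmin ht⟩

theorem integral_le_two_mul_of_forall_integral_le {f : ℝ → ℝ} {ℓ K : ℝ}
    (hf : ∀ a b, IntervalIntegrable f volume a b) (hK : ∀ x, ∫ t in x..(x + ℓ), f t ≤ K)
    (x : ℝ) : ∫ t in (x - ℓ)..(x + ℓ), f t ≤ 2 * K := by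
  have := hK (x - ℓ)
  rw [sub_add_cancel] at this
  rw [← integral_add_adjacent_intervals (hf _ x) (hf x _)]
  linarith [hK x]

theorem sq_mul_two_mul_mul_le_of_sq_le {ℓ M Q e s v : ℝ} (hℓ : 0 < ℓ) (hM : 0 < M)
    (hs : ℓ * s ^ 2 ≤ 2 * Q) (hv : v ^ 2 ≤ M * e) :
    ℓ ^ 2 * (2 * M * (s * v)) ≤ ℓ ^ 3 * e / 4 + 8 * M ^ 3 * Q := by
  -- `8 ℓ² M² s v ≤ ℓ³ v² + 16 M⁴ ℓ s²` is AM-GM, i.e. `ℓ (ℓ v - 4 M² s)² ≥ 0`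
  have hamgm := mul_nonneg hℓ.le (sq_nonneg (ℓ * v - 4 * M ^ 2 * s))
  have h1 := mul_le_mul_of_nonneg_left hv (pow_nonneg hℓ.le 3)
  have h2 := mul_le_mul_of_nonneg_left hs (by positivity : (0 : ℝ) ≤ 16 * M ^ 4)
  refine le_of_mul_le_mul_left ?_ (by positivity : (0 : ℝ) < 4 * M)
  nlinarith

theorem mul_energy_le_integral_add {F : Type*} [NormedAddCommGroup F] {u u' : ℝ → F}
    (huc : Continuous u) (hu'c : Continuous u') {p q x M : ℝ}
    (hpq : p ≤ q) (hE : ∀ t ∈ Icc p q, ‖u x‖ ^ 2 + ‖u' x‖ ^ 2 ≤ M * (‖u t‖ ^ 2 + ‖u' t‖ ^ 2)) :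
    (q - p) * (‖u x‖ ^ 2 + ‖u' x‖ ^ 2)
      ≤ M * ((∫ t in p..q, ‖u t‖ ^ 2) + ∫ t in p..q, ‖u' t‖ ^ 2) := by
  have hnu : Continuous fun t => ‖u t‖ ^ 2 := by fun_prop
  have hkin : Continuous fun t => ‖u' t‖ ^ 2 := by fun_prop
  rw [← integral_add (hnu.intervalIntegrable _ _) (hkin.intervalIntegrable _ _),
    ← intervalIntegral.integral_const_mul]
  exact mul_le_integral_of_forall_le hpq (((hnu.add hkin).intervalIntegrable _ _).const_mul M) hE

section Gronwall

variable {E E' h : ℝ → ℝ} {p q : ℝ}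

theorem abs_sub_le_integral_mul_of_abs_deriv_le (hE : ∀ t, HasDerivAt E (E' t) t)
    (hh : ∀ a b, IntervalIntegrable h volume a b) (hbd : ∀ t, |E' t| ≤ h t * E t)
    (hpq : p ≤ q) : |E q - E p| ≤ ∫ t in p..q, h t * E t := by
  have hEc : Continuous E := continuous_iff_continuousAt.2 fun t => (hE t).continuousAt
  have hint : IntegrableOn (fun t => h t * E t) (Icc p q) :=
    (intervalIntegrable_iff_integrableOn_Icc_of_le hpq).1
      ((hh p q).mul_continuousOn hEc.continuousOn)
  rw [abs_le, neg_le, neg_sub]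
  constructor
  · have := sub_le_integral_of_hasDeriv_right_of_le (g := fun t => -E t) hpq
      hEc.neg.continuousOn (fun t _ => (hE t).neg.hasDerivWithinAt) hint
      fun t _ => (neg_le_abs _).trans (hbd t)
    linarith
  · exact sub_le_integral_of_hasDeriv_right_of_le hpq hEc.continuousOn
      (fun t _ => (hE t).hasDerivWithinAt) hint fun t _ => (le_abs_self _).trans (hbd t)

theorem le_two_mul_of_integral_le_quarter (hE : ∀ t, HasDerivAt E (E' t) t)
    (hh : ∀ a b, IntervalIntegrable h volume a b) (hh0 : ∀ t, 0 ≤ h t)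
    (hE0 : ∀ t, 0 ≤ E t) (hbd : ∀ t, |E' t| ≤ h t * E t) (hpq : p ≤ q)
    (hsmall : ∫ t in p..q, h t ≤ 1 / 4) : ∀ r ∈ Icc p q, E r ≤ 2 * E p ∧ E p ≤ 2 * E r := by
  have hEc : Continuous E := continuous_iff_continuousAt.2 fun t => (hE t).continuousAt
  obtain ⟨r₀, hr₀, hmax⟩ := isCompact_Icc.exists_isMaxOn ⟨p, left_mem_Icc.2 hpq⟩ hEc.continuousOn
  have hvar : ∀ s ∈ Icc p q, |E s - E p| ≤ E r₀ / 4 := fun s hs => calc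
    |E s - E p| ≤ ∫ t in p..s, h t * E t := abs_sub_le_integral_mul_of_abs_deriv_le hE hh hbd hs.1
    _ ≤ ∫ t in p..s, h t * E r₀ :=
      integral_mono_on hs.1 ((hh p s).mul_continuousOn hEc.continuousOn) ((hh p s).mul_const _)
        fun t ht => mul_le_mul_of_nonneg_left (hmax ⟨ht.1, ht.2.trans hs.2⟩) (hh0 t)
    _ = (∫ t in p..s, h t) * E r₀ := integral_mul_const _ _
    _ ≤ 1 / 4 * E r₀ := by
      refine mul_le_mul_of_nonneg_right (le_trans ?_ hsmall) (hE0 r₀)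
      exact integral_mono_interval le_rfl hs.1 hs.2 (.of_forall fun t => hh0 t) (hh p q)
    _ = E r₀ / 4 := by ring
  intro r hr
  have h₀ := abs_le.1 (hvar r₀ hr₀)
  have hr' := abs_le.1 (hvar r hr)
  constructor <;> linarith [hE0 p, hE0 r]

theorem le_two_pow_mul_of_integral_le (hE : ∀ t, HasDerivAt E (E' t) t)
    (hh : ∀ a b, IntervalIntegrable h volume a b) (hh0 : ∀ t, 0 ≤ h t)
    (hE0 : ∀ t, 0 ≤ E t) (hbd : ∀ t, |E' t| ≤ h t * E t) (n : ℕ) (hpq : p ≤ q)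
    (hint : ∫ t in p..q, h t ≤ (n + 1) / 4) :
    ∀ r ∈ Icc p q, E r ≤ 2 ^ (n + 1) * E p ∧ E p ≤ 2 ^ (n + 1) * E r := by
  induction n generalizing p with
  | zero =>
    intro r hr
    simpa using le_two_mul_of_integral_le_quarter hE hh hh0 hE0 hbd hpq (by simpa using hint) r hr
  | succ n ih =>
    intro r hr
    have h2 : (2 : ℝ) ≤ 2 ^ (n + 1 + 1) := le_self_pow₀ one_le_two (by omega)
    have hpow : (2 : ℝ) ^ (n + 1 + 1) = 2 * 2 ^ (n + 1) := by ring
    by_cases hsmall : ∫ t in p..q, h t ≤ 1 / 4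
    · obtain ⟨h₁, h₂⟩ := le_two_mul_of_integral_le_quarter hE hh hh0 hE0 hbd hpq hsmall r hr
      constructor <;> nlinarith [hE0 p, hE0 r]
    obtain ⟨c, hc, hc4⟩ := intermediate_value_Icc hpq (continuous_primitive hh p).continuousOn
      (show (1 / 4 : ℝ) ∈ Icc (∫ t in p..p, h t) (∫ t in p..q, h t) by
        rw [integral_same]; exact ⟨by norm_num, (not_le.1 hsmall).le⟩)
    replace hc4 : ∫ t in p..c, h t = 1 / 4 := hc4
    have hpc := le_two_mul_of_integral_le_quarter hE hh hh0 hE0 hbd hc.1 hc4.le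
    rcases le_total r c with hrc | hcr
    · obtain ⟨h₁, h₂⟩ := hpc r ⟨hr.1, hrc⟩
      constructor <;> nlinarith [hE0 p, hE0 r]
    · have hcq : ∫ t in c..q, h t ≤ ((n : ℝ) + 1) / 4 := by
        have := integral_add_adjacent_intervals (hh p c) (hh c q)
        simp only [Nat.cast_succ] at hint
        linarith
      obtain ⟨h₁, h₂⟩ := ih hc.2 hcq r ⟨hcr, hr.2⟩
      obtain ⟨h₃, h₄⟩ := hpc c (right_mem_Icc.2 hc.1)
      have : (0 : ℝ) ≤ 2 ^ (n + 1) := by positivity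
      constructor <;> nlinarith [hE0 p, hE0 r, hE0 c]

end Gronwall

section InnerProductSpace

variable {F : Type*} [NormedAddCommGroup F] [InnerProductSpace ℝ F]

theorem abs_two_inner_add_two_inner_apply_le (p q : F) (T : F →L[ℝ] F) :
    |2 * ⟪p, q⟫ + 2 * ⟪q, T p⟫| ≤ (1 + ‖T‖) * (‖p‖ ^ 2 + ‖q‖ ^ 2) := by
  have hpq : |⟪p, q⟫| ≤ ‖p‖ * ‖q‖ := abs_real_inner_le_norm p q
  have hqTp : |⟪q, T p⟫| ≤ ‖T‖ * (‖p‖ * ‖q‖) := calc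
    |⟪q, T p⟫| ≤ ‖q‖ * ‖T p‖ := abs_real_inner_le_norm q (T p)
    _ ≤ ‖q‖ * (‖T‖ * ‖p‖) := by gcongr; exact T.le_opNorm p
    _ = ‖T‖ * (‖p‖ * ‖q‖) := by ring
  have hT := norm_nonneg T
  calc |2 * ⟪p, q⟫ + 2 * ⟪q, T p⟫| ≤ 2 * |⟪p, q⟫| + 2 * |⟪q, T p⟫| := by
        simpa only [abs_mul, abs_two] using abs_add_le (2 * ⟪p, q⟫) (2 * ⟪q, T p⟫)
    _ ≤ (1 + ‖T‖) * (2 * ‖p‖ * ‖q‖) := by nlinarith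
    _ ≤ (1 + ‖T‖) * (‖p‖ ^ 2 + ‖q‖ ^ 2) := by gcongr; exact two_mul_le_add_sq ‖p‖ ‖q‖

variable {A : ℝ → F →L[ℝ] F} {u u' : ℝ → F}

theorem hasDerivAt_energy (hu : ∀ t, HasDerivAt u (u' t) t)
    (hu' : ∀ t, HasDerivAt u' (A t (u t)) t) (t : ℝ) :
    HasDerivAt (fun s => ‖u s‖ ^ 2 + ‖u' s‖ ^ 2) (2 * ⟪u t, u' t⟫ + 2 * ⟪u' t, A t (u t)⟫) t :=
  (hu t).norm_sq.add (hu' t).norm_sq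

theorem energy_le_mul_energy (hu : ∀ t, HasDerivAt u (u' t) t)
    (hu' : ∀ t, HasDerivAt u' (A t (u t)) t) {ℓ K : ℝ}
    (hA : ∀ a b, IntervalIntegrable (fun t => ‖A t‖) volume a b)
    (hK : ∀ x, ∫ t in x..(x + ℓ), ‖A t‖ ≤ K) (x : ℝ) {t : ℝ} (ht : t ∈ Icc (x - ℓ) (x + ℓ)) :
    ‖u t‖ ^ 2 + ‖u' t‖ ^ 2 ≤ 2 ^ (⌈8 * (ℓ + K)⌉₊ + 1) * (‖u x‖ ^ 2 + ‖u' x‖ ^ 2) ∧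
      ‖u x‖ ^ 2 + ‖u' x‖ ^ 2 ≤ 2 ^ (⌈8 * (ℓ + K)⌉₊ + 1) * (‖u t‖ ^ 2 + ‖u' t‖ ^ 2) := by
  set E := fun s => ‖u s‖ ^ 2 + ‖u' s‖ ^ 2
  have hh : ∀ a b, IntervalIntegrable (fun s => 1 + ‖A s‖) volume a b :=
    fun a b => intervalIntegrable_const.add (hA a b)
  have hh0 : ∀ s, 0 ≤ 1 + ‖A s‖ := fun s => by positivity
  have hE0 : ∀ s, 0 ≤ E s := fun s => by positivity
  have hbd : ∀ s, |2 * ⟪u s, u' s⟫ + 2 * ⟪u' s, A s (u s)⟫| ≤ (1 + ‖A s‖) * E s :=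
    fun s => abs_two_inner_add_two_inner_apply_le (u s) (u' s) (A s)
  have hwin : ∫ s in (x - ℓ)..(x + ℓ), (1 + ‖A s‖) ≤ (⌈8 * (ℓ + K)⌉₊ + 1) / 4 := by
    rw [integral_add intervalIntegrable_const (hA _ _), intervalIntegral.integral_const,
      smul_eq_mul]
    linarith [integral_le_two_mul_of_forall_integral_le hA hK x, Nat.le_ceil (8 * (ℓ + K))]
  have hsub : ∀ {p q}, x - ℓ ≤ p → p ≤ q → q ≤ x + ℓ →
      ∫ s in p..q, (1 + ‖A s‖) ≤ (⌈8 * (ℓ + K)⌉₊ + 1) / 4 := fun hp hpq hq =>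
    (integral_mono_interval hp hpq hq (.of_forall hh0) (hh _ _)).trans hwin
  rcases le_total t x with htx | hxt
  · exact (le_two_pow_mul_of_integral_le (hasDerivAt_energy hu hu') hh hh0 hE0 hbd _ htx
      (hsub ht.1 htx (by linarith [ht.1, ht.2])) x (right_mem_Icc.2 htx)).symm
  · exact le_two_pow_mul_of_integral_le (hasDerivAt_energy hu hu') hh hh0 hE0 hbd _ hxt
      (hsub (by linarith [ht.1, ht.2]) hxt ht.2) t (right_mem_Icc.2 hxt)

theorem sq_norm_le_sq_norm_add_integral (hu : ∀ t, HasDerivAt u (u' t) t) (hu'c : Continuous u')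
    {a b r c : ℝ} (hc : 0 < c) (hr : r ∈ Icc a b) :
    ‖u r‖ ^ 2 ≤ ‖u a‖ ^ 2 + (∫ t in a..b, ‖u' t‖ ^ 2) / c + c * ∫ t in a..b, ‖u t‖ ^ 2 := by
  have huc : Continuous u := continuous_iff_continuousAt.2 fun t => (hu t).continuousAt
  have hkin : Continuous fun t => ‖u' t‖ ^ 2 := by fun_prop
  have hnu : Continuous fun t => ‖u t‖ ^ 2 := by fun_prop
  have hφ : Continuous fun t => ‖u' t‖ ^ 2 / c + c * ‖u t‖ ^ 2 := by fun_prop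
  have hderiv : ∀ t, 2 * ⟪u t, u' t⟫ ≤ ‖u' t‖ ^ 2 / c + c * ‖u t‖ ^ 2 := fun t => by
    have hsq : 0 ≤ (‖u' t‖ - c * ‖u t‖) ^ 2 / c := by positivity
    have hexp : (‖u' t‖ - c * ‖u t‖) ^ 2 / c
        = ‖u' t‖ ^ 2 / c + c * ‖u t‖ ^ 2 - 2 * (‖u t‖ * ‖u' t‖) := by
      field_simp; ring
    linarith [real_inner_le_norm (u t) (u' t)]
  have hftc := sub_le_integral_of_hasDeriv_right_of_le (g := fun t => ‖u t‖ ^ 2) hr.1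
    hnu.continuousOn (fun t _ => (hu t).norm_sq.hasDerivWithinAt) hφ.integrableOn_Icc
    fun t _ => hderiv t
  have hmono := integral_mono_interval le_rfl hr.1 hr.2 (.of_forall fun t => by positivity)
    (hφ.intervalIntegrable (μ := volume) a b)
  rw [integral_add ((hkin.intervalIntegrable a b).div_const c)
    ((hnu.intervalIntegrable a b).const_mul c), intervalIntegral.integral_div,
    intervalIntegral.integral_const_mul] at hmono
  linarith

theorem integral_sq_norm_deriv_le (hu : ∀ t, HasDerivAt u (u' t) t)
    (hu' : ∀ t, HasDerivAt u' (A t (u t)) t) {a b : ℝ} (hab : a ≤ b)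
    (hA : IntervalIntegrable (fun t => ‖A t‖) volume a b) :
    ∫ t in a..b, ‖u' t‖ ^ 2 ≤ ⟪u b, u' b⟫ - ⟪u a, u' a⟫ + ∫ t in a..b, ‖A t‖ * ‖u t‖ ^ 2 := by
  have huc : Continuous u := continuous_iff_continuousAt.2 fun t => (hu t).continuousAt
  have hu'c : Continuous u' := continuous_iff_continuousAt.2 fun t => (hu' t).continuousAt
  have hkin : IntervalIntegrable (fun t => ‖u' t‖ ^ 2) volume a b :=
    (hu'c.norm.pow 2).intervalIntegrable a b
  have hpot : IntervalIntegrable (fun t => ‖A t‖ * ‖u t‖ ^ 2) volume a b :=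
    hA.mul_continuousOn (huc.norm.pow 2).continuousOn
  have hderiv : ∀ t, ‖u' t‖ ^ 2 - ‖A t‖ * ‖u t‖ ^ 2 ≤ ⟪u t, A t (u t)⟫ + ⟪u' t, u' t⟫ := by
    intro t
    have : ‖u t‖ * ‖A t (u t)‖ ≤ ‖A t‖ * ‖u t‖ ^ 2 := by
      nlinarith [(A t).le_opNorm (u t), norm_nonneg (u t)]
    linarith [neg_le_of_abs_le (abs_real_inner_le_norm (u t) (A t (u t))),
      real_inner_self_eq_norm_sq (u' t)]
  have := integral_le_sub_of_hasDeriv_right_of_le hab (huc.inner hu'c).continuousOn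
    (fun t _ => ((hu t).inner ℝ (hu' t)).hasDerivWithinAt)
    ((intervalIntegrable_iff_integrableOn_Icc_of_le hab).1 (hkin.sub hpot)) fun t _ => hderiv t
  rw [integral_sub hkin hpot] at this
  linarith

theorem integral_sq_norm_deriv_le_of_integral_le (hu : ∀ t, HasDerivAt u (u' t) t)
    (hu' : ∀ t, HasDerivAt u' (A t (u t)) t) {a b K : ℝ} (hab : a ≤ b)
    (hA : IntervalIntegrable (fun t => ‖A t‖) volume a b) (hK : ∫ t in a..b, ‖A t‖ ≤ K) :
    ∫ t in a..b, ‖u' t‖ ^ 2 ≤ 2 * (⟪u b, u' b⟫ - ⟪u a, u' a⟫) + 2 * K * ‖u a‖ ^ 2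
      + 2 * K * (2 * K + 1) * ∫ t in a..b, ‖u t‖ ^ 2 := by
  have huc : Continuous u := continuous_iff_continuousAt.2 fun t => (hu t).continuousAt
  have hu'c : Continuous u' := continuous_iff_continuousAt.2 fun t => (hu' t).continuousAt
  have hK0 : 0 ≤ K := (integral_nonneg hab fun t _ => norm_nonneg (A t)).trans hK
  have hP0 : 0 ≤ ∫ t in a..b, ‖u' t‖ ^ 2 := integral_nonneg hab fun t _ => by positivity
  -- weighting `‖u'‖²` by `1 / (2K + 1)` makes its contribution below at most half of the left side
  have hpot : ∫ t in a..b, ‖A t‖ * ‖u t‖ ^ 2 ≤ K * (‖u a‖ ^ 2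
      + (∫ t in a..b, ‖u' t‖ ^ 2) / (2 * K + 1) + (2 * K + 1) * ∫ t in a..b, ‖u t‖ ^ 2) := by
    have hS := fun r (hr : r ∈ Icc a b) =>
      sq_norm_le_sq_norm_add_integral (c := 2 * K + 1) hu hu'c (by linarith) hr
    calc _ ≤ ∫ t in a..b, ‖A t‖ * (‖u a‖ ^ 2
          + (∫ t in a..b, ‖u' t‖ ^ 2) / (2 * K + 1) + (2 * K + 1) * ∫ t in a..b, ‖u t‖ ^ 2) :=
          integral_mono_on hab (hA.mul_continuousOn (huc.norm.pow 2).continuousOn)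
            (hA.mul_const _) fun t ht => mul_le_mul_of_nonneg_left (hS t ht) (norm_nonneg _)
      _ ≤ _ := by
        rw [intervalIntegral.integral_mul_const]
        exact mul_le_mul_of_nonneg_right hK ((sq_nonneg _).trans (hS a ⟨le_rfl, hab⟩))
  have hKP : K * ((∫ t in a..b, ‖u' t‖ ^ 2) / (2 * K + 1)) ≤ (∫ t in a..b, ‖u' t‖ ^ 2) / 2 := by
    rw [mul_div_assoc', div_le_div_iff₀ (by linarith) two_pos]
    nlinarith
  nlinarith [integral_sq_norm_deriv_le hu hu' hab hA]

theorem mul_integral_sq_norm_deriv_le (hu : ∀ t, HasDerivAt u (u' t) t)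
    (hu' : ∀ t, HasDerivAt u' (A t (u t)) t) {ℓ K M Q e a b : ℝ} (hℓ : 0 < ℓ) (hM : 0 < M)
    (hab : a ≤ b) (hA : IntervalIntegrable (fun t => ‖A t‖) volume a b)
    (hK : ∫ t in a..b, ‖A t‖ ≤ 2 * K) (hQ : ∫ t in a..b, ‖u t‖ ^ 2 ≤ Q)
    (hua : ℓ * ‖u a‖ ^ 2 ≤ 2 * Q) (hub : ℓ * ‖u b‖ ^ 2 ≤ 2 * Q)
    (hu'a : ‖u' a‖ ^ 2 ≤ M * e) (hu'b : ‖u' b‖ ^ 2 ≤ M * e) :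
    ℓ ^ 2 * (M * ∫ t in a..b, ‖u' t‖ ^ 2)
      ≤ ℓ ^ 3 * e / 2 + (16 * M ^ 3 + 8 * M * K * ℓ + 4 * M * K * (4 * K + 1) * ℓ ^ 2) * Q := by
  have hK0 : 0 ≤ K := by linarith [integral_nonneg (μ := volume) hab fun t _ => norm_nonneg (A t)]
  have hP := integral_sq_norm_deriv_le_of_integral_le hu hu' hab hA hK
  have hbdry : ⟪u b, u' b⟫ - ⟪u a, u' a⟫ ≤ ‖u a‖ * ‖u' a‖ + ‖u b‖ * ‖u' b‖ := by
    linarith [real_inner_le_norm (u b) (u' b),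
      neg_le_of_abs_le (abs_real_inner_le_norm (u a) (u' a))]
  have h1 := mul_le_mul_of_nonneg_left hP (by positivity : 0 ≤ ℓ ^ 2 * M)
  have h2 := mul_le_mul_of_nonneg_left hbdry (by positivity : 0 ≤ ℓ ^ 2 * (2 * M))
  have h3 := mul_le_mul_of_nonneg_left hua (by positivity : 0 ≤ 4 * M * K * ℓ)
  have h4 := mul_le_mul_of_nonneg_left hQ (by positivity : 0 ≤ ℓ ^ 2 * M * (4 * K * (4 * K + 1)))
  linarith [sq_mul_two_mul_mul_le_of_sq_le hℓ hM hua hu'a, sq_mul_two_mul_mul_le_of_sq_le hℓ hM hub hu'b]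

theorem cube_mul_energy_le_integral (hu : ∀ t, HasDerivAt u (u' t) t)
    (hu' : ∀ t, HasDerivAt u' (A t (u t)) t) {ℓ K M x : ℝ} (hℓ : 0 < ℓ) (hM : 0 < M)
    (hA : ∀ a b, IntervalIntegrable (fun t => ‖A t‖) volume a b)
    (hK : ∀ x, ∫ t in x..(x + ℓ), ‖A t‖ ≤ K)
    (hE : ∀ t ∈ Icc (x - ℓ) (x + ℓ), ‖u t‖ ^ 2 + ‖u' t‖ ^ 2 ≤ M * (‖u x‖ ^ 2 + ‖u' x‖ ^ 2) ∧
      ‖u x‖ ^ 2 + ‖u' x‖ ^ 2 ≤ M * (‖u t‖ ^ 2 + ‖u' t‖ ^ 2)) :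
    ℓ ^ 3 * (‖u x‖ ^ 2 + ‖u' x‖ ^ 2) ≤ 2 * (M * ℓ ^ 2 + 16 * M ^ 3 + 8 * M * K * ℓ
      + 4 * M * K * (4 * K + 1) * ℓ ^ 2) * ∫ t in (x - ℓ)..(x + ℓ), ‖u t‖ ^ 2 := by
  have huc : Continuous u := continuous_iff_continuousAt.2 fun t => (hu t).continuousAt
  have hu'c : Continuous u' := continuous_iff_continuousAt.2 fun t => (hu' t).continuousAt
  have hnu : Continuous fun t => ‖u t‖ ^ 2 := by fun_prop
  have hkin : Continuous fun t => ‖u' t‖ ^ 2 := by fun_prop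
  have hQ : ∀ {p q}, x - ℓ ≤ p → p ≤ q → q ≤ x + ℓ →
      ∫ t in p..q, ‖u t‖ ^ 2 ≤ ∫ t in (x - ℓ)..(x + ℓ), ‖u t‖ ^ 2 := fun hp hpq hq =>
    integral_mono_interval hp hpq hq (.of_forall fun t => by positivity)
      (hnu.intervalIntegrable _ _)
  obtain ⟨a, ha, hua⟩ := exists_mem_Icc_mul_le_integral (p := x - ℓ) (q := x - ℓ / 2)
    (by linarith) hnu.continuousOn
  obtain ⟨b, hb, hub⟩ := exists_mem_Icc_mul_le_integral (p := x + ℓ / 2) (q := x + ℓ)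
    (by linarith) hnu.continuousOn
  rw [show x - ℓ / 2 - (x - ℓ) = ℓ / 2 by ring] at hua
  rw [show x + ℓ - (x + ℓ / 2) = ℓ / 2 by ring] at hub
  have hab : a ≤ b := by linarith [ha.2, hb.1]
  have hlow := mul_energy_le_integral_add huc hu'c (p := x - ℓ / 2) (q := x + ℓ / 2)
    (by linarith) fun t ht => (hE t ⟨by linarith [ht.1], by linarith [ht.2]⟩).2
  rw [show x + ℓ / 2 - (x - ℓ / 2) = ℓ by ring] at hlow
  have hmidu := hQ (p := x - ℓ / 2) (q := x + ℓ / 2) (by linarith) (by linarith) (by linarith)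
  have hmidu' : ∫ t in (x - ℓ / 2)..(x + ℓ / 2), ‖u' t‖ ^ 2 ≤ ∫ t in a..b, ‖u' t‖ ^ 2 :=
    integral_mono_interval ha.2 (by linarith) hb.1 (.of_forall fun t => by positivity)
      (hkin.intervalIntegrable _ _)
  have hAab : ∫ t in a..b, ‖A t‖ ≤ 2 * K :=
    (integral_mono_interval ha.1 hab (by linarith [hb.2]) (.of_forall fun t => norm_nonneg _)
      (hA _ _)).trans (integral_le_two_mul_of_forall_integral_le hA hK x)
  have hu'_le : ∀ t ∈ Icc (x - ℓ) (x + ℓ), ‖u' t‖ ^ 2 ≤ M * (‖u x‖ ^ 2 + ‖u' x‖ ^ 2) :=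
    fun t ht => by linarith [(hE t ht).1, sq_nonneg ‖u t‖]
  have hkinP := mul_integral_sq_norm_deriv_le hu hu' hℓ hM hab (hA a b) hAab
    (hQ ha.1 hab (by linarith [hb.2]))
    (by linarith [hQ (q := x - ℓ / 2) le_rfl (by linarith) (by linarith)])
    (by linarith [hQ (p := x + ℓ / 2) (by linarith) (by linarith) le_rfl])
    (hu'_le a ⟨ha.1, by linarith [ha.2]⟩) (hu'_le b ⟨by linarith [hb.1], hb.2⟩)
  have := mul_le_mul_of_nonneg_left (add_le_add hmidu hmidu') (by positivity : 0 ≤ ℓ ^ 2 * M)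
  nlinarith

end InnerProductSpace

/-- If `V` has uniformly locally bounded `L¹` norm `‖V‖_{ℓ,u}`, then there is `C > 0`
(depending only on `ℓ` and `‖V‖_{ℓ,u}`) such that every solution `u` of `−u'' + Vu = 0`
satisfies `∫_{x−ℓ}^{x+ℓ} ‖u(t)‖² dt ≥ C(‖u(x)‖² + ‖u'(x)‖²)` for every `x`. -/
theorem solution_local_L2_lower_bound (N : ℕ) (ℓ : ℝ) (hℓ : 0 < ℓ)
    (V : ℝ → Matrix (Fin N) (Fin N) ℝ)
    (hVloc : ∀ a b : ℝ,
      IntervalIntegrable (fun t => ‖Matrix.toEuclideanCLM (𝕜 := ℝ) (n := Fin N) (V t)‖)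
        volume a b)
    (K : ℝ)
    (hK : ∀ x : ℝ, (∫ t in x..(x + ℓ), ‖Matrix.toEuclideanCLM (𝕜 := ℝ) (n := Fin N) (V t)‖) ≤ K) :
    ∃ C > 0, ∀ (u u' : ℝ → EuclideanSpace ℝ (Fin N)),
      (∀ t, HasDerivAt u (u' t) t) →
      (∀ t, HasDerivAt u' ((Matrix.toEuclideanCLM (𝕜 := ℝ) (n := Fin N) (V t)) (u t)) t) →
      ∀ x : ℝ, C * (‖u x‖ ^ 2 + ‖u' x‖ ^ 2) ≤ ∫ t in (x - ℓ)..(x + ℓ), ‖u t‖ ^ 2 := by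
  have hK0 : 0 ≤ K :=
    (integral_nonneg (by linarith) fun t _ => norm_nonneg _).trans (hK 0)
  lift K to NNReal using hK0
  set M : ℝ := 2 ^ (⌈8 * (ℓ + K)⌉₊ + 1)
  have hM : 0 < M := by positivity
  set D := 2 * (M * ℓ ^ 2 + 16 * M ^ 3 + 8 * M * K * ℓ + 4 * M * K * (4 * K + 1) * ℓ ^ 2)
  refine ⟨ℓ ^ 3 / D, by positivity, fun u u' hu hu' x => ?_⟩
  rw [div_mul_eq_mul_div, div_le_iff₀ (by positivity), mul_comm _ D]
  exact cube_mul_energy_le_integral hu hu' hℓ hM hVloc hK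
    fun t ht => energy_le_mul_energy hu hu' hVloc hK x ht
end
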